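/- Let v_f > 0, k_j > 0, 0 < v_c < v_f, k_c = (v_f - v_c)·k_j/v_f, and fix an average density K with k_c/4 < K ≤ 3k_c/4. Over the admissible set S_K = {(k1,k2) : 0 ≤ k1 ≤ k_j, 0 ≤ k2 ≤ k_j, k1 + k2 = 2K}, the cruising space-mean speed W(k1,k2) = (k1·G(k1) + k2·min{v_c, G(k2)})/(k1 + k2) attains its maximum value v_c + (v_f - v_c)·k_c/(8K), and this maximum is attained at (k1, k2) = (k_c/2, 2K - k_c/2). -/

import Mathlib

/-! Writing `k_c` for the critical density, `G k - v_c = (v_f / k_j) (k_c - k)`, so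
`W = v_c + (k₁ (G k₁ - v_c) + k₂ (min v_c (G k₂) - v_c)) / (k₁ + k₂)`. The second summand is
never positive and vanishes once `k₂ ≤ k_c`, while `k₁ (G k₁ - v_c) = (v_f / k_j) k₁ (k_c - k₁)`
is a downward parabola with maximum `(v_f - v_c) k_c / 4` at `k₁ = k_c / 2`. The window
`k_c / 4 < K ≤ 3 k_c / 4` is exactly what puts `2K - k_c / 2` into `[0, k_c]`. -/

/-- Greenshields speed at density `k`, with free-flow speed `vf` and jam density `kj`. -/
noncomputable def G (vf kj k : ℝ) : ℝ := vf * (1 - k / kj)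

/-- Two-bin network space-mean speed where all vehicles in bin 2 cruise for parking
at desired cruising speed `vc` (worst case). -/
noncomputable def W (vf kj vc k1 k2 : ℝ) : ℝ :=
  (k1 * G vf kj k1 + k2 * min vc (G vf kj k2)) / (k1 + k2)

/-- Admissible two-bin configurations at network average density `K`. -/
def SK (kj K : ℝ) : Set (ℝ × ℝ) :=
  {p | 0 ≤ p.1 ∧ p.1 ≤ kj ∧ 0 ≤ p.2 ∧ p.2 ≤ kj ∧ p.1 + p.2 = 2 * K}

noncomputable def criticalDensity (vf kj vc : ℝ) : ℝ := (vf - vc) * kj / vf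

section Greenshields

variable {vf kj vc : ℝ}

theorem criticalDensity_pos (hvf : 0 < vf) (hkj : 0 < kj) (hvcf : vc < vf) :
    0 < criticalDensity vf kj vc :=
  div_pos (mul_pos (sub_pos.2 hvcf) hkj) hvf

theorem criticalDensity_le (hvf : 0 < vf) (hkj : 0 ≤ kj) (hvc : 0 ≤ vc) :
    criticalDensity vf kj vc ≤ kj := by
  rw [criticalDensity, div_le_iff₀ hvf]
  nlinarith

theorem G_sub_eq (hvf : vf ≠ 0) (hkj : kj ≠ 0) (k : ℝ) :
    G vf kj k - vc = vf / kj * (criticalDensity vf kj vc - k) := by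
  rw [G, criticalDensity]
  field_simp
  ring

theorem le_G_of_le_criticalDensity (hvf : 0 < vf) (hkj : 0 < kj) {k : ℝ}
    (hk : k ≤ criticalDensity vf kj vc) : vc ≤ G vf kj k := by
  have := G_sub_eq (vc := vc) hvf.ne' hkj.ne' k
  nlinarith [mul_nonneg (div_pos hvf hkj).le (sub_nonneg.2 hk)]

theorem mul_G_sub_le (hvf : 0 < vf) (hkj : 0 < kj) (k : ℝ) :
    k * (G vf kj k - vc) ≤ (vf - vc) * criticalDensity vf kj vc / 4 := by
  have hslope : vf / kj * criticalDensity vf kj vc = vf - vc := by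
    rw [criticalDensity]
    field_simp
  rw [G_sub_eq hvf.ne' hkj.ne', ← hslope]
  have hparabola : k * (criticalDensity vf kj vc - k) ≤ criticalDensity vf kj vc ^ 2 / 4 := by
    nlinarith [sq_nonneg (k - criticalDensity vf kj vc / 2)]
  nlinarith [mul_le_mul_of_nonneg_left hparabola (div_pos hvf hkj).le]

theorem half_criticalDensity_mul_G_sub (hvf : vf ≠ 0) (hkj : kj ≠ 0) :
    criticalDensity vf kj vc / 2 * (G vf kj (criticalDensity vf kj vc / 2) - vc) =
      (vf - vc) * criticalDensity vf kj vc / 4 := by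
  rw [G_sub_eq hvf hkj, criticalDensity]
  field_simp
  ring

end Greenshields

section SpaceMeanSpeed

variable {vf kj vc k1 k2 : ℝ}

theorem W_eq (h : k1 + k2 ≠ 0) :
    W vf kj vc k1 k2 = vc + (k1 * (G vf kj k1 - vc) + k2 * (min vc (G vf kj k2) - vc)) /
      (k1 + k2) := by
  rw [W]
  field_simp
  ring

theorem W_le (hk2 : 0 ≤ k2) (h : 0 < k1 + k2) :
    W vf kj vc k1 k2 ≤ vc + k1 * (G vf kj k1 - vc) / (k1 + k2) := by
  rw [W_eq h.ne']
  gcongr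
  nlinarith [min_le_left vc (G vf kj k2)]

theorem W_eq_of_le_G (h : k1 + k2 ≠ 0) (hG : vc ≤ G vf kj k2) :
    W vf kj vc k1 k2 = vc + k1 * (G vf kj k1 - vc) / (k1 + k2) := by
  rw [W_eq h, min_eq_left hG, sub_self, mul_zero, add_zero]

end SpaceMeanSpeed

/-- With cruising (worst case), for `kc/4 < K ≤ 3kc/4`, the maximum of `W` over `S_K`
is `vc + (vf - vc) kc / (8K)`, attained at `(kc/2, 2K - kc/2)`. -/
theorem cruising_upper_envelope_2 (vf kj vc K : ℝ)
    (hvf : 0 < vf) (hkj : 0 < kj) (hvc0 : 0 < vc) (hvcf : vc < vf)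
    (hK0 : (vf - vc) * kj / vf / 4 < K) (hK : K ≤ 3 * ((vf - vc) * kj / vf) / 4) :
    (∀ p ∈ SK kj K,
        W vf kj vc p.1 p.2 ≤ vc + (vf - vc) * ((vf - vc) * kj / vf) / (8 * K)) ∧
    (((vf - vc) * kj / vf / 2, 2 * K - (vf - vc) * kj / vf / 2) ∈ SK kj K ∧
      W vf kj vc ((vf - vc) * kj / vf / 2) (2 * K - (vf - vc) * kj / vf / 2) =
        vc + (vf - vc) * ((vf - vc) * kj / vf) / (8 * K)) := by
  rw [show (vf - vc) * kj / vf = criticalDensity vf kj vc from rfl] at hK0 hK ⊢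
  have hkc := criticalDensity_pos hvf hkj hvcf
  have hkckj := criticalDensity_le hvf hkj.le hvc0.le
  have hK2 : (0 : ℝ) < 2 * K := by linarith
  have hpeak : (vf - vc) * criticalDensity vf kj vc / 4 / (2 * K) =
      (vf - vc) * criticalDensity vf kj vc / (8 * K) := by
    ring
  refine ⟨fun ⟨k1, k2⟩ ⟨_, _, hk2, _, hsum⟩ => ?_, ⟨?_, ?_⟩⟩
  · calc W vf kj vc k1 k2 ≤ vc + k1 * (G vf kj k1 - vc) / (k1 + k2) := W_le hk2 (by linarith)
      _ ≤ vc + (vf - vc) * criticalDensity vf kj vc / 4 / (2 * K) := by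
        rw [hsum]; gcongr; exact mul_G_sub_le hvf hkj k1
      _ = _ := by rw [hpeak]
  · exact ⟨by linarith, by linarith, by linarith, by linarith, by ring⟩
  · rw [W_eq_of_le_G (by linarith) (le_G_of_le_criticalDensity hvf hkj (by linarith)),
      add_sub_cancel, half_criticalDensity_mul_G_sub hvf.ne' hkj.ne', hpeak]
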